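/- arXiv:2508.12607 — 2 statements merged into one kernel-verified Lean document; each statement's English description precedes it below -/
import Mathlib

section
/- Let K be a field, m ≥ 2 an integer, G a finite simple graph on [n] and v an internal vertex of G. Then the sequence of S-modules 0 → S/J_{K_m,G} → S/J_{K_m,G_v} ⊕ S/(P_v + J_{K_m,G∖v}) → S/(P_v + J_{K_m,G_v∖v}) → 0 is exact, where the first map sends the class of f to the pair of classes of f, and the second map sends a pair of classes of (f,g) to the class of f − g. -/
/-- A maximal clique of a simple graph: a clique that is maximal under inclusion. -/
def MaxClq {V : Type*} (G : SimpleGraph V) (s : Set V) : Prop :=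
  G.IsClique s ∧ ∀ t : Set V, G.IsClique t → s ⊆ t → s = t

/-- An internal vertex: a vertex lying in at least two (distinct) maximal cliques. -/
def InternalVtx {V : Type*} (G : SimpleGraph V) (v : V) : Prop :=
  ∃ s t : Set V, MaxClq G s ∧ MaxClq G t ∧ s ≠ t ∧ v ∈ s ∧ v ∈ t

/-- `iv G`: the number of internal vertices of `G`. -/
noncomputable def ivNum {V : Type*} (G : SimpleGraph V) : ℕ :=
  {v : V | InternalVtx G v}.ncard

/-- `c G`: the number of connected components of `G`. -/
noncomputable def compNum {V : Type*} (G : SimpleGraph V) : ℕ :=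
  Nat.card G.ConnectedComponent

/-- `𝒞 G`: the number of maximal cliques of `G`. -/
noncomputable def maxClqNum {V : Type*} (G : SimpleGraph V) : ℕ :=
  {s : Set V | MaxClq G s}.ncard

/-- `ω G`: the clique number of `G`, the maximum size of a clique. -/
noncomputable def clqNum {V : Type*} (G : SimpleGraph V) : ℕ :=
  sSup {k : ℕ | ∃ s : Set V, G.IsClique s ∧ s.ncard = k}

/-- A set of edges of `G` is clique-disjoint if no two distinct edges of it are both
contained in a single clique of `G`. -/
def CliqueDisjointEdges {V : Type*} (G : SimpleGraph V) (E : Set (Sym2 V)) : Prop :=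
  E ⊆ G.edgeSet ∧ ∀ e ∈ E, ∀ f ∈ E, e ≠ f →
    ¬ ∃ s : Set V, G.IsClique s ∧ (∀ x ∈ e, x ∈ s) ∧ (∀ x ∈ f, x ∈ s)

/-- `η G`: the maximum cardinality of a clique-disjoint set of edges of `G`. -/
noncomputable def etaNum {V : Type*} (G : SimpleGraph V) : ℕ :=
  sSup {k : ℕ | ∃ E : Set (Sym2 V), CliqueDisjointEdges G E ∧ E.ncard = k}

/-- `G_v`: the graph on the same vertex set as `G` whose edges are those of `G` together
with all edges between distinct neighbours of `v`. -/
def addNbrEdges {V : Type*} (G : SimpleGraph V) (v : V) : SimpleGraph V where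
  Adj a b := G.Adj a b ∨ (a ≠ b ∧ G.Adj v a ∧ G.Adj v b)
  symm := by
    refine ⟨?_⟩
    intro a b h
    rcases h with h | ⟨hne, h1, h2⟩
    · exact Or.inl h.symm
    · exact Or.inr ⟨hne.symm, h2, h1⟩
  loopless := by
    refine ⟨?_⟩
    intro a h
    rcases h with h | ⟨hne, _, _⟩
    · exact G.irrefl h
    · exact hne rfl

/-- The graph `G ∖ v`: the vertex `v` is isolated and the remaining edges are exactly
those of the induced subgraph of `G` on the complement of `v`, so that the binomial
edge ideal generators of `G ∖ v` are exactly those coming from edges of `G` avoiding `v`. -/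
def delVtx {V : Type*} (G : SimpleGraph V) (v : V) : SimpleGraph V where
  Adj a b := G.Adj a b ∧ a ≠ v ∧ b ≠ v
  symm := by
    refine ⟨?_⟩
    rintro a b ⟨h, ha, hb⟩
    exact ⟨h.symm, hb, ha⟩
  loopless := by
    refine ⟨?_⟩
    rintro a ⟨h, _, _⟩
    exact G.irrefl h

open MvPolynomial in
/-- The generalized binomial edge ideal `J_{K_m, G}` of a graph `G` on `[n]`, inside
`S = K[x_{ij} : i ∈ [m], j ∈ [n]]`: it is generated by the `2`-minors
`x_{ik} x_{jl} − x_{il} x_{jk}` for `1 ≤ i < j ≤ m` and `{k, l} ∈ E(G)`. -/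
noncomputable def genBEI (K : Type*) [Field K] (m n : ℕ) (G : SimpleGraph (Fin n)) :
    Ideal (MvPolynomial (Fin m × Fin n) K) :=
  Ideal.span {f | ∃ (i j : Fin m) (k l : Fin n), i < j ∧ G.Adj k l ∧
    f = X (i, k) * X (j, l) - X (i, l) * X (j, k)}

open MvPolynomial in
/-- `P_v = (x_{1v}, …, x_{mv})`. -/
noncomputable def Pvert (K : Type*) [Field K] (m n : ℕ) (v : Fin n) :
    Ideal (MvPolynomial (Fin m × Fin n) K) :=
  Ideal.span (Set.range fun i : Fin m => X (i, v))

theorem genBEI_mono (K : Type*) [Field K] (m n : ℕ) {G H : SimpleGraph (Fin n)}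
    (h : ∀ a b : Fin n, G.Adj a b → H.Adj a b) :
    genBEI K m n G ≤ genBEI K m n H :=
  Ideal.span_mono (by
    rintro f ⟨i, j, k, l, hij, hkl, rfl⟩
    exact ⟨i, j, k, l, hij, h _ _ hkl, rfl⟩)

open MvPolynomial in
theorem genBEI_le_sup (K : Type*) [Field K] (m n : ℕ) (H : SimpleGraph (Fin n))
    (v : Fin n) :
    genBEI K m n H ≤ Pvert K m n v + genBEI K m n (delVtx H v) := by
  refine Ideal.span_le.mpr ?_
  rintro f ⟨i, j, k, l, hij, hkl, rfl⟩
  rw [Submodule.add_eq_sup]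
  by_cases hk : k = v
  · subst hk
    refine Ideal.mem_sup_left (Ideal.sub_mem _ ?_ ?_)
    · exact Ideal.mul_mem_right _ _ (Ideal.subset_span ⟨i, rfl⟩)
    · exact Ideal.mul_mem_left _ _ (Ideal.subset_span ⟨j, rfl⟩)
  · by_cases hl : l = v
    · subst hl
      refine Ideal.mem_sup_left (Ideal.sub_mem _ ?_ ?_)
      · exact Ideal.mul_mem_left _ _ (Ideal.subset_span ⟨j, rfl⟩)
      · exact Ideal.mul_mem_right _ _ (Ideal.subset_span ⟨i, rfl⟩)
    · exact Ideal.mem_sup_right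
        (Ideal.subset_span ⟨i, j, k, l, hij, ⟨hkl, hk, hl⟩, rfl⟩)

theorem sup_le_sup_gv (K : Type*) [Field K] (m n : ℕ) (G : SimpleGraph (Fin n))
    (v : Fin n) :
    Pvert K m n v + genBEI K m n (delVtx G v) ≤
      Pvert K m n v + genBEI K m n (delVtx (addNbrEdges G v) v) := by
  rw [Submodule.add_eq_sup, Submodule.add_eq_sup]
  exact sup_le_sup_left
    (genBEI_mono K m n (G := delVtx G v) (H := delVtx (addNbrEdges G v) v)
      (fun a b h => ⟨Or.inl h.1, h.2.1, h.2.2⟩)) _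

/-- The map `S/J_{K_m,G} → S/J_{K_m,G_v} ⊕ S/(P_v + J_{K_m,G∖v})` sending the class of
`f` to the pair of classes of `f`. -/
noncomputable def firstMap (K : Type*) [Field K] (m n : ℕ) (G : SimpleGraph (Fin n))
    (v : Fin n) :
    (MvPolynomial (Fin m × Fin n) K ⧸ genBEI K m n G) →ₗ[MvPolynomial (Fin m × Fin n) K]
      (MvPolynomial (Fin m × Fin n) K ⧸ genBEI K m n (addNbrEdges G v)) ×
      (MvPolynomial (Fin m × Fin n) K ⧸ (Pvert K m n v + genBEI K m n (delVtx G v))) :=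
  LinearMap.prod
    (Submodule.mapQ _ _ LinearMap.id
      (fun x hx => genBEI_mono K m n (fun _ _ h => Or.inl h) hx))
    (Submodule.mapQ _ _ LinearMap.id
      (fun x hx => genBEI_le_sup K m n G v hx))

/-- The map `S/J_{K_m,G_v} ⊕ S/(P_v + J_{K_m,G∖v}) → S/(P_v + J_{K_m,G_v∖v})` sending a
pair of classes of `(f, g)` to the class of `f − g`. -/
noncomputable def secondMap (K : Type*) [Field K] (m n : ℕ) (G : SimpleGraph (Fin n))
    (v : Fin n) :
    ((MvPolynomial (Fin m × Fin n) K ⧸ genBEI K m n (addNbrEdges G v)) ×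
      (MvPolynomial (Fin m × Fin n) K ⧸ (Pvert K m n v + genBEI K m n (delVtx G v))))
      →ₗ[MvPolynomial (Fin m × Fin n) K]
      (MvPolynomial (Fin m × Fin n) K ⧸
        (Pvert K m n v + genBEI K m n (delVtx (addNbrEdges G v) v))) :=
  (Submodule.mapQ (genBEI K m n (addNbrEdges G v))
      (Pvert K m n v + genBEI K m n (delVtx (addNbrEdges G v) v)) LinearMap.id
      (fun x hx => genBEI_le_sup K m n (addNbrEdges G v) v hx)).comp
    (LinearMap.fst _ _ _) -
  (Submodule.mapQ (Pvert K m n v + genBEI K m n (delVtx G v))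
      (Pvert K m n v + genBEI K m n (delVtx (addNbrEdges G v) v)) LinearMap.id
      (fun x hx => sup_le_sup_gv K m n G v hx)).comp
    (LinearMap.snd _ _ _)

/-! Write `φ` for the substitution `x_{iv} ↦ 0`. Exactness in the middle and on the right is formal,
because `P_v + J_{G_v∖v} ⊆ J_{G_v} + (P_v + J_{G∖v})`; injectivity amounts to
`J_{G_v} ∩ (P_v + J_{G∖v}) ⊆ J_G`. For `f` in the intersection, `φ f ∈ J_{G∖v} ⊆ J_G`, while
`f - φ f ∈ J_G` holds for every `f ∈ J_{G_v}`: on generators because the edges added in `G_v`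
avoid `v`, and for multiples because `c - φ c ∈ P_v` and `P_v · J_{G_v} ⊆ J_G`. -/

open MvPolynomial

namespace Submodule

variable {R M : Type*} [Ring R] [AddCommGroup M] [Module R M] {N N₁ N₂ N₃ : Submodule R M}

theorem factor_prod_factor_injective (h₁ : N ≤ N₁) (h₂ : N ≤ N₂) (h : N₁ ⊓ N₂ ≤ N) :
    Function.Injective ((factor h₁).prod (factor h₂)) := by
  refine (injective_iff_map_eq_zero _).2 fun x hx => ?_
  induction x using Quotient.induction_on with | H a => ?_
  simp only [LinearMap.prod_apply, Function.prod_apply, mapQ_apply, LinearMap.id_apply,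
    Prod.mk_eq_zero, Quotient.mk_eq_zero] at hx ⊢
  exact h hx

theorem exact_factor_prod_factor_sub (h₁ : N ≤ N₁) (h₂ : N ≤ N₂) (h₁₃ : N₁ ≤ N₃)
    (h₂₃ : N₂ ≤ N₃) (h : N₃ ≤ N₁ ⊔ N₂) :
    Function.Exact ((factor h₁).prod (factor h₂))
      ((factor h₁₃).comp (LinearMap.fst R (M ⧸ N₁) (M ⧸ N₂)) -
        (factor h₂₃).comp (LinearMap.snd R (M ⧸ N₁) (M ⧸ N₂))) := by
  rintro ⟨x₁, x₂⟩
  induction x₁ using Quotient.induction_on with | H a => ?_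
  induction x₂ using Quotient.induction_on with | H b => ?_
  constructor
  · intro hab
    obtain ⟨c₁, hc₁, c₂, hc₂, hc⟩ : ∃ c₁ ∈ N₁, ∃ c₂ ∈ N₂, c₁ + c₂ = a - b := by
      refine mem_sup.1 (h ((Quotient.mk_eq_zero _).1 ?_))
      simpa [Quotient.mk_sub] using hab
    refine ⟨Quotient.mk (a - c₁), Prod.ext ((Quotient.eq _).2 ?_) ((Quotient.eq _).2 ?_)⟩
    · simpa using neg_mem hc₁
    · show a - c₁ - b ∈ N₂
      rwa [sub_right_comm, ← hc, add_sub_cancel_left]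
  · rintro ⟨x, hx⟩
    rw [← hx]
    induction x using Quotient.induction_on with | H c => ?_
    simp

theorem factor_comp_fst_sub_surjective (h₁₃ : N₁ ≤ N₃) (h₂₃ : N₂ ≤ N₃) :
    Function.Surjective
      ((factor h₁₃).comp (LinearMap.fst R (M ⧸ N₁) (M ⧸ N₂)) -
        (factor h₂₃).comp (LinearMap.snd R (M ⧸ N₁) (M ⧸ N₂))) := by
  intro y
  induction y using Quotient.induction_on with | H a => ?_
  exact ⟨(Quotient.mk a, 0), by simp⟩

end Submodule

section GeneralizedBinomialEdgeIdeal

variable {K : Type*} [Field K] {m n : ℕ}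

theorem genBEI_delVtx_le (H : SimpleGraph (Fin n)) (v : Fin n) :
    genBEI K m n (delVtx H v) ≤ genBEI K m n H :=
  genBEI_mono K m n fun _ _ h => h.1

theorem minor_mem_genBEI {G : SimpleGraph (Fin n)} (i j : Fin m) {k l : Fin n}
    (h : G.Adj k l) : X (i, k) * X (j, l) - X (i, l) * X (j, k) ∈ genBEI K m n G := by
  rcases lt_trichotomy i j with hij | rfl | hji
  · exact Ideal.subset_span ⟨i, j, k, l, hij, h, rfl⟩
  · rw [mul_comm, sub_self]
    exact zero_mem _
  · have h' : X (j, l) * X (i, k) - X (j, k) * X (i, l) ∈ genBEI K m n G :=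
      Ideal.subset_span ⟨j, i, l, k, hji, h.symm, rfl⟩
    rwa [mul_comm (X (j, l)), mul_comm (X (j, k))] at h'

/-- A Plücker-type relation writes `x_{kv}` times a minor on the columns `u, w` through minors
on the edges `{u, v}` and `{v, w}` of `G`. -/
theorem X_mul_minor_mem_genBEI {G : SimpleGraph (Fin n)} {v u w : Fin n} (hu : G.Adj v u)
    (hw : G.Adj v w) (i j k : Fin m) :
    X (k, v) * (X (i, u) * X (j, w) - X (i, w) * X (j, u)) ∈ genBEI K m n G := by
  have e : (X (k, v) : MvPolynomial (Fin m × Fin n) K) *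
        (X (i, u) * X (j, w) - X (i, w) * X (j, u)) =
      X (k, w) * (X (i, u) * X (j, v) - X (i, v) * X (j, u))
        - X (i, u) * (X (j, v) * X (k, w) - X (j, w) * X (k, v))
        + X (j, u) * (X (i, v) * X (k, w) - X (i, w) * X (k, v)) := by
    ring
  rw [e]
  exact add_mem (sub_mem (Ideal.mul_mem_left _ _ (minor_mem_genBEI i j hu.symm))
    (Ideal.mul_mem_left _ _ (minor_mem_genBEI j k hw)))
    (Ideal.mul_mem_left _ _ (minor_mem_genBEI i k hw))

theorem Pvert_mul_genBEI_addNbrEdges_le (G : SimpleGraph (Fin n)) (v : Fin n) :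
    Pvert K m n v * genBEI K m n (addNbrEdges G v) ≤ genBEI K m n G := by
  rw [Pvert, genBEI, Ideal.span_mul_span']
  refine Ideal.span_le.2 ?_
  rintro _ ⟨_, ⟨k, rfl⟩, _, ⟨i, j, a, b, hij, hab, rfl⟩, rfl⟩
  rcases hab with hab | ⟨-, hva, hvb⟩
  · exact Ideal.mul_mem_left _ _ (Ideal.subset_span ⟨i, j, a, b, hij, hab, rfl⟩)
  · exact X_mul_minor_mem_genBEI hva hvb i j k

variable (K m) in
noncomputable def killVertex (v : Fin n) :
    MvPolynomial (Fin m × Fin n) K →ₐ[K] MvPolynomial (Fin m × Fin n) K :=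
  aeval fun p => if p.2 = v then 0 else X p

@[simp]
theorem killVertex_X (v : Fin n) (i : Fin m) (k : Fin n) :
    killVertex K m v (X (i, k)) = if k = v then 0 else X (i, k) := by
  simp [killVertex]

theorem sub_killVertex_mem_Pvert (v : Fin n) (f : MvPolynomial (Fin m × Fin n) K) :
    f - killVertex K m v f ∈ Pvert K m n v := by
  have h : (Ideal.Quotient.mkₐ K (Pvert K m n v)).comp (killVertex K m v) =
      Ideal.Quotient.mkₐ K (Pvert K m n v) := by
    refine MvPolynomial.algHom_ext fun ⟨i, k⟩ => ?_
    by_cases hk : k = v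
    · subst hk
      rw [AlgHom.comp_apply, killVertex_X, if_pos rfl, map_zero, Ideal.Quotient.mkₐ_eq_mk,
        eq_comm, Ideal.Quotient.eq_zero_iff_mem]
      exact Ideal.subset_span ⟨i, rfl⟩
    · simp [hk]
  exact Ideal.Quotient.eq.1 (AlgHom.congr_fun h f).symm

theorem Pvert_le_comap_killVertex (v : Fin n) (I : Ideal (MvPolynomial (Fin m × Fin n) K)) :
    Pvert K m n v ≤ I.comap (killVertex K m v) := by
  refine Ideal.span_le.2 ?_
  rintro _ ⟨i, rfl⟩
  simp

theorem genBEI_le_comap_killVertex (H : SimpleGraph (Fin n)) (v : Fin n) :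
    genBEI K m n H ≤ (genBEI K m n (delVtx H v)).comap (killVertex K m v) := by
  refine Ideal.span_le.2 ?_
  rintro _ ⟨i, j, k, l, hij, hkl, rfl⟩
  by_cases hk : k = v
  · simp [hk]
  by_cases hl : l = v
  · simp [hl]
  rw [SetLike.mem_coe, Ideal.mem_comap]
  simp only [map_sub, map_mul, killVertex_X, if_neg hk, if_neg hl]
  exact Ideal.subset_span ⟨i, j, k, l, hij, ⟨hkl, hk, hl⟩, rfl⟩

theorem sub_killVertex_mem_genBEI {G : SimpleGraph (Fin n)} {v : Fin n}
    {f : MvPolynomial (Fin m × Fin n) K} (hf : f ∈ genBEI K m n (addNbrEdges G v)) :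
    f - killVertex K m v f ∈ genBEI K m n G := by
  induction hf using Submodule.span_induction with
  | mem g hg =>
    obtain ⟨i, j, k, l, hij, hkl, rfl⟩ := hg
    rcases hkl with hkl | ⟨-, hvk, hvl⟩
    · exact sub_mem (Ideal.subset_span ⟨i, j, k, l, hij, hkl, rfl⟩)
        (genBEI_delVtx_le G v
          (genBEI_le_comap_killVertex G v (Ideal.subset_span ⟨i, j, k, l, hij, hkl, rfl⟩)))
    · simp [hvk.ne', hvl.ne']
  | zero => simp
  | add f g _ _ hf hg =>
    rw [map_add, add_sub_add_comm]
    exact add_mem hf hg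
  | smul c f hf' hf =>
    rw [smul_eq_mul, map_mul, show c * f - killVertex K m v c * killVertex K m v f =
      c * (f - killVertex K m v f) + (c - killVertex K m v c) * killVertex K m v f by ring]
    exact add_mem (Ideal.mul_mem_left _ _ hf) (Pvert_mul_genBEI_addNbrEdges_le G v
      (Ideal.mul_mem_mul (sub_killVertex_mem_Pvert v c)
        (genBEI_delVtx_le _ v (genBEI_le_comap_killVertex _ v hf'))))

theorem genBEI_addNbrEdges_inf_le (G : SimpleGraph (Fin n)) (v : Fin n) :
    genBEI K m n (addNbrEdges G v) ⊓ (Pvert K m n v + genBEI K m n (delVtx G v)) ≤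
      genBEI K m n G := by
  rintro f ⟨hf₁, hf₂⟩
  have hkill : killVertex K m v f ∈ genBEI K m n G :=
    (sup_le (Pvert_le_comap_killVertex v _)
      ((genBEI_le_comap_killVertex _ v).trans
        (Ideal.comap_mono ((genBEI_delVtx_le _ v).trans (genBEI_delVtx_le G v))))) hf₂
  simpa using add_mem (sub_killVertex_mem_genBEI hf₁) hkill

theorem Pvert_add_genBEI_delVtx_addNbrEdges_le (G : SimpleGraph (Fin n)) (v : Fin n) :
    Pvert K m n v + genBEI K m n (delVtx (addNbrEdges G v) v) ≤
      genBEI K m n (addNbrEdges G v) ⊔ (Pvert K m n v + genBEI K m n (delVtx G v)) :=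
  sup_le (le_sup_left.trans le_sup_right) ((genBEI_delVtx_le _ v).trans le_sup_left)

end GeneralizedBinomialEdgeIdeal

theorem stmt4_general (K : Type*) [Field K] (m n : ℕ) (G : SimpleGraph (Fin n))
    (v : Fin n) :
    Function.Injective (firstMap K m n G v) ∧
    Function.Exact (firstMap K m n G v) (secondMap K m n G v) ∧
    Function.Surjective (secondMap K m n G v) :=
  ⟨Submodule.factor_prod_factor_injective _ _ (genBEI_addNbrEdges_inf_le G v),
    Submodule.exact_factor_prod_factor_sub _ _ _ _ (Pvert_add_genBEI_delVtx_addNbrEdges_le G v),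
    Submodule.factor_comp_fst_sub_surjective _ _⟩

/-- if `m ≥ 2` and `v` is an internal vertex of `G`, then the sequence
`0 → S/J_{K_m,G} → S/J_{K_m,G_v} ⊕ S/(P_v + J_{K_m,G∖v}) → S/(P_v + J_{K_m,G_v∖v}) → 0`
is exact, where the first map sends the class of `f` to the pair of classes of `f` and
the second map sends a pair of classes of `(f, g)` to the class of `f − g`. -/
theorem stmt4 (K : Type*) [Field K] (m n : ℕ) (hm : 2 ≤ m) (G : SimpleGraph (Fin n))
    (v : Fin n) (hv : InternalVtx G v) :
    Function.Injective (firstMap K m n G v) ∧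
    Function.Exact (firstMap K m n G v) (secondMap K m n G v) ∧
    Function.Surjective (secondMap K m n G v) :=
  stmt4_general K m n G v
end

section
/- Fix an integer m ≥ 2. The map ψ defined on finite simple graphs by ψ(G) = n(G) + γ_m(G) (an integer-valued map) is a (reg,m)-compatible map, i.e., it satisfies conditions (a), (b) and (c) of the definition of (reg,m)-compatibility. -/
/-- `γ_m(G) = Σ_i min {m − ω(G_i) − 1, −1}`, the sum being over the connected
components `G_i` of `G`. -/
noncomputable def gammaM (m : ℕ) {V : Type*} (G : SimpleGraph V) : ℤ :=
  ∑ᶠ c : G.ConnectedComponent,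
    min ((m : ℤ) - (clqNum (G.induce c.supp) : ℤ) - 1) (-1)

/-- A map `ψ` from finite simple graphs to `ℤ` is `(reg, m)`-compatible if:
(a) `ψ(Ĝ) ≤ ψ(G)` where `Ĝ` is obtained from `G` by deleting all isolated vertices;
(b) if every connected component of `G` is a complete graph on at least 2 vertices,
then `ψ(G) ≥ Σ_i min {m − 1, n_i − 1}` where the `n_i` are the component sizes;
(c) if some connected component of `G` is not complete, then there is an internal vertex
`v` with `ψ(G∖v) ≤ ψ(G)` and `ψ(G_v) < ψ(G)`, or with `ψ(G∖v) ≤ ψ(G)`,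
`ψ(G_v) = ψ(G)` and `ψ(G_v∖v) < ψ(G)`. -/
def RegCompatibleZ (m : ℕ) (ψ : ∀ (V : Type) [Finite V], SimpleGraph V → ℤ) : Prop :=
  (∀ (V : Type) [Finite V] (G : SimpleGraph V),
      ψ _ (G.induce {u : V | ∃ w : V, G.Adj u w}) ≤ ψ V G) ∧
  (∀ (V : Type) [Finite V] (G : SimpleGraph V),
      (∀ u w : V, G.Reachable u w → u ≠ w → G.Adj u w) →
      (∀ u : V, ∃ w : V, u ≠ w ∧ G.Reachable u w) →
      ∑ᶠ c : G.ConnectedComponent, min ((m : ℤ) - 1) ((c.supp.ncard : ℤ) - 1) ≤ ψ V G) ∧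
  (∀ (V : Type) [Finite V] (G : SimpleGraph V),
      (∃ u w : V, u ≠ w ∧ G.Reachable u w ∧ ¬ G.Adj u w) →
      ∃ v : V, InternalVtx G v ∧
        ((ψ _ (G.induce {u : V | u ≠ v}) ≤ ψ V G ∧ ψ V (addNbrEdges G v) < ψ V G) ∨
          (ψ _ (G.induce {u : V | u ≠ v}) ≤ ψ V G ∧ ψ V (addNbrEdges G v) = ψ V G ∧
            ψ _ ((addNbrEdges G v).induce {u : V | u ≠ v}) < ψ V G)))

/-!
Write `ψ(G) = n(G) + γ_m(G)` as a sum over the connected components `C` of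
`|C| + g(ω(C))`, where `g(k) = min (m - k - 1) (-1)`. An isolated vertex contributes
`1 + g(1) = 0` because `m ≥ 2`, which gives (a); a complete component contributes
`min (m - 1) (|C| - 1)`, which gives (b).

For (c), a non-complete component `D` contains a vertex `v` with two non-adjacent neighbours
`p, q`; the maximal cliques containing `{v, p}` and `{v, q}` differ, so `v` is internal.
Deleting `v` removes one vertex and replaces the term `g(ω(D))` by the terms of the pieces of
`D - v`, each at most `-1`, the piece containing a clique `K` with `v ∉ K` contributing at most
`g(|K|)`. Taking for `K` a maximum clique of `D` minus `v` gives `ψ(G - v) ≤ ψ(G)`. The graph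
`G_v` has the same components as `G` and `ω(D)` can only grow, so `ψ(G_v) ≤ ψ(G)`. In case of
equality, exchanging `v` for `p` or `q` in a maximum clique of `D` yields a clique of `G_v` of
the same size avoiding `v`, and deleting `v` from `G_v` then makes `ψ` drop strictly.
-/

open SimpleGraph Function

section CliqueNumber

variable {V W : Type*} [Finite V] [Finite W] {G : SimpleGraph V}

lemma bddAbove_ncard_isClique (G : SimpleGraph V) :
    BddAbove {k : ℕ | ∃ s : Set V, G.IsClique s ∧ s.ncard = k} :=
  ⟨Nat.card V, by rintro k ⟨s, -, rfl⟩; exact Set.ncard_le_card s⟩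

lemma SimpleGraph.IsClique.ncard_le_clqNum {s : Set V} (hs : G.IsClique s) :
    s.ncard ≤ clqNum G :=
  le_csSup (bddAbove_ncard_isClique G) ⟨s, hs, rfl⟩

lemma exists_isClique_ncard_eq_clqNum (G : SimpleGraph V) :
    ∃ s : Set V, G.IsClique s ∧ s.ncard = clqNum G :=
  Nat.sSup_mem (s := {k : ℕ | ∃ s : Set V, G.IsClique s ∧ s.ncard = k})
    ⟨0, ∅, by simp, Set.ncard_empty V⟩ (bddAbove_ncard_isClique G)

lemma clqNum_le_of_injective {H : SimpleGraph W} (f : G →g H) (hf : Injective f) :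
    clqNum G ≤ clqNum H := by
  obtain ⟨s, hs, hcard⟩ := exists_isClique_ncard_eq_clqNum G
  rw [← hcard, ← Set.ncard_image_of_injective s hf]
  refine IsClique.ncard_le_clqNum ?_
  rintro _ ⟨a, ha, rfl⟩ _ ⟨b, hb, rfl⟩ hne
  exact f.map_adj (hs ha hb (ne_of_apply_ne f hne))

lemma clqNum_mono {H : SimpleGraph V} (h : G ≤ H) : clqNum G ≤ clqNum H :=
  clqNum_le_of_injective (Hom.ofLE h) injective_id

lemma clqNum_congr {H : SimpleGraph W} (e : G ≃g H) : clqNum G = clqNum H :=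
  (clqNum_le_of_injective e.toHom e.injective).antisymm
    (clqNum_le_of_injective e.symm.toHom e.symm.injective)

lemma SimpleGraph.IsClique.ncard_le_clqNum_induce {K S : Set V} (hK : G.IsClique K)
    (hKS : K ⊆ S) : K.ncard ≤ clqNum (G.induce S) := by
  have hrange : K ⊆ Set.range (Subtype.val : S → V) := by simpa using hKS
  have hK' : (G.induce S).IsClique (Subtype.val ⁻¹' K) := by
    rwa [isClique_induce_iff, Set.image_preimage_eq_of_subset hrange]
  rw [← Set.ncard_preimage_of_injective_subset_range Subtype.val_injective hrange]
  exact hK'.ncard_le_clqNum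

lemma exists_isClique_ncard_eq_clqNum_induce (G : SimpleGraph V) (S : Set V) :
    ∃ K ⊆ S, G.IsClique K ∧ K.ncard = clqNum (G.induce S) := by
  obtain ⟨t, ht, hcard⟩ := exists_isClique_ncard_eq_clqNum (G.induce S)
  refine ⟨Subtype.val '' t, by simp, isClique_induce_iff.1 ht, ?_⟩
  rw [Set.ncard_image_of_injective _ Subtype.val_injective, hcard]

lemma clqNum_induce_eq_ncard {S : Set V} (hS : G.IsClique S) :
    clqNum (G.induce S) = S.ncard := by
  obtain ⟨K, hKS, -, hK⟩ := exists_isClique_ncard_eq_clqNum_induce G S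
  exact (hK ▸ Set.ncard_le_ncard hKS).antisymm (hS.ncard_le_clqNum_induce subset_rfl)

noncomputable def induceInduceIso (G : SimpleGraph V) (s : Set V) (t : Set s) :
    (G.induce s).induce t ≃g G.induce (Subtype.val '' t) where
  toEquiv := Equiv.Set.image Subtype.val t Subtype.val_injective
  map_rel_iff' := Iff.rfl

lemma clqNum_induce_induce (s : Set V) (t : Set s) :
    clqNum ((G.induce s).induce t) = clqNum (G.induce (Subtype.val '' t)) :=
  clqNum_congr (induceInduceIso G s t)

end CliqueNumber

section Weights

variable {V : Type*}

def gammaTerm (m k : ℕ) : ℤ := min ((m : ℤ) - k - 1) (-1)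

lemma gammaTerm_le_neg_one (m k : ℕ) : gammaTerm m k ≤ -1 := min_le_right _ _

lemma gammaTerm_antitone (m : ℕ) : Antitone (gammaTerm m) := by
  intro k l hkl
  simp only [gammaTerm]
  omega

lemma gammaTerm_le_add_one (m : ℕ) {k l : ℕ} (h : l ≤ k + 1) :
    gammaTerm m k ≤ gammaTerm m l + 1 := by
  simp only [gammaTerm]
  omega

lemma gammaM_eq_sum (m : ℕ) (G : SimpleGraph V) [Fintype G.ConnectedComponent] :
    gammaM m G = ∑ c : G.ConnectedComponent, gammaTerm m (clqNum (G.induce c.supp)) := by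
  rw [gammaM, finsum_eq_sum_of_fintype]
  rfl

noncomputable def psi (m : ℕ) (G : SimpleGraph V) : ℤ := Nat.card V + gammaM m G

noncomputable def componentWeight (m : ℕ) (G : SimpleGraph V) (S : Set V) : ℤ :=
  S.ncard + gammaTerm m (clqNum (G.induce S))

variable [Finite V] {G : SimpleGraph V}

lemma sum_ncard_supp (G : SimpleGraph V) [Fintype G.ConnectedComponent] :
    ∑ c : G.ConnectedComponent, c.supp.ncard = Nat.card V := by
  classical
  have := Fintype.ofFinite V
  rw [Nat.card_eq_fintype_card, ← Finset.card_univ,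
    Finset.card_eq_sum_card_fiberwise (f := G.connectedComponentMk) (t := Finset.univ)
      fun _ _ => Finset.mem_univ _]
  refine Finset.sum_congr rfl fun c _ => ?_
  rw [← Set.ncard_coe_finset]
  congr
  ext x
  simp [ConnectedComponent.mem_supp_iff]

lemma psi_eq_finsum (m : ℕ) (G : SimpleGraph V) :
    psi m G = ∑ᶠ c : G.ConnectedComponent, componentWeight m G c.supp := by
  have := Fintype.ofFinite G.ConnectedComponent
  rw [psi, gammaM_eq_sum, ← sum_ncard_supp G, finsum_eq_sum_of_fintype, Nat.cast_sum,
    ← Finset.sum_add_distrib]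
  rfl

lemma componentWeight_singleton {m : ℕ} (hm : 2 ≤ m) (x : V) : componentWeight m G {x} = 0 := by
  rw [componentWeight, clqNum_induce_eq_ncard (by simp), Set.ncard_singleton, gammaTerm]
  omega

lemma componentWeight_of_isClique (m : ℕ) {S : Set V} (hS : G.IsClique S) :
    componentWeight m G S = min ((m : ℤ) - 1) ((S.ncard : ℤ) - 1) := by
  rw [componentWeight, clqNum_induce_eq_ncard hS, gammaTerm]
  omega

end Weights

section InducedComponents

variable {V : Type*} {G : SimpleGraph V} {s : Set V}

lemma image_val_supp_subset_supp_map (c : (G.induce s).ConnectedComponent) :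
    Subtype.val '' c.supp ⊆ (c.map (Embedding.induce s).toHom).supp := by
  rintro _ ⟨x, rfl, rfl⟩
  exact (ConnectedComponent.map_mk (Embedding.induce s).toHom x).symm

lemma reachable_induce_of_supp_subset {d : G.ConnectedComponent} (hd : d.supp ⊆ s) {x y : s}
    (hx : (x : V) ∈ d.supp) (hxy : G.Reachable x y) : (G.induce s).Reachable x y := by
  classical
  obtain ⟨w⟩ := hxy
  refine ⟨w.induce s fun z hz => hd ?_⟩
  rw [ConnectedComponent.mem_supp_iff] at hx ⊢
  rw [← hx]
  exact ConnectedComponent.sound (w.takeUntil z hz).reachable.symm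

lemma map_induce_injOn {c₁ c₂ : (G.induce s).ConnectedComponent}
    (hs : (c₁.map (Embedding.induce s).toHom).supp ⊆ s)
    (h : c₁.map (Embedding.induce s).toHom = c₂.map (Embedding.induce s).toHom) :
    c₁ = c₂ := by
  induction c₁ using ConnectedComponent.ind with | _ x =>
  induction c₂ using ConnectedComponent.ind with | _ y =>
  simp only [ConnectedComponent.map_mk] at h hs
  exact ConnectedComponent.sound
    (reachable_induce_of_supp_subset hs rfl (ConnectedComponent.exact h))

lemma image_val_supp_eq_supp_map {c : (G.induce s).ConnectedComponent}
    (hs : (c.map (Embedding.induce s).toHom).supp ⊆ s) :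
    Subtype.val '' c.supp = (c.map (Embedding.induce s).toHom).supp := by
  refine (image_val_supp_subset_supp_map c).antisymm fun y hy => ⟨⟨y, hs hy⟩, ?_, rfl⟩
  refine (map_induce_injOn hs ?_).symm
  rw [ConnectedComponent.map_mk]
  exact hy.symm

lemma exists_map_induce_eq {d : G.ConnectedComponent} (hd : d.supp ⊆ s) :
    ∃ c : (G.induce s).ConnectedComponent, c.map (Embedding.induce s).toHom = d := by
  obtain ⟨x, hx⟩ := d.nonempty_supp
  exact ⟨(G.induce s).connectedComponentMk ⟨x, hd hx⟩, hx⟩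

section Fibres

variable {M : Type*} [AddCommMonoid M] [Fintype (G.induce s).ConnectedComponent]
  [DecidableEq G.ConnectedComponent] (F : Set V → M) {d : G.ConnectedComponent}

lemma sum_map_induce_eq_of_supp_subset (hd : d.supp ⊆ s) :
    ∑ c : (G.induce s).ConnectedComponent with c.map (Embedding.induce s).toHom = d,
      F (Subtype.val '' c.supp) = F d.supp := by
  obtain ⟨c, rfl⟩ := exists_map_induce_eq hd
  rw [Finset.sum_eq_single_of_mem c (by simp) fun c' hc' hne =>
    absurd (map_induce_injOn hd (Finset.mem_filter.1 hc').2.symm).symm hne,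
    image_val_supp_eq_supp_map hd]

lemma sum_map_induce_eq_zero_of_disjoint (hd : Disjoint d.supp s) :
    ∑ c : (G.induce s).ConnectedComponent with c.map (Embedding.induce s).toHom = d,
      F (Subtype.val '' c.supp) = 0 := by
  refine Finset.sum_eq_zero fun c hc => ?_
  obtain ⟨x, hx⟩ := c.nonempty_supp
  have hxd : (x : V) ∈ d.supp :=
    (Finset.mem_filter.1 hc).2 ▸ image_val_supp_subset_supp_map c ⟨x, hx, rfl⟩
  exact absurd x.2 (Set.disjoint_left.1 hd hxd)

end Fibres

lemma supp_connectedComponentMk_eq_singleton {x : V} (hx : x ∉ G.support) :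
    (G.connectedComponentMk x).supp = {x} := by
  refine Set.eq_singleton_iff_unique_mem.2 ⟨rfl, fun y hy => ?_⟩
  by_contra hyx
  exact hx (mem_support_of_reachable (Ne.symm hyx) (ConnectedComponent.exact hy).symm)

lemma SimpleGraph.IsClique.subset_image_supp_induce {K : Set V} (hK : G.IsClique K)
    (hKs : K ⊆ s) {x : V} (hx : x ∈ K) :
    K ⊆ Subtype.val '' ((G.induce s).connectedComponentMk ⟨x, hKs hx⟩).supp := by
  intro y hy
  refine ⟨⟨y, hKs hy⟩, ?_, rfl⟩
  by_cases hyx : y = x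
  · subst hyx; rfl
  · exact ConnectedComponent.sound
      (show (G.induce s).Adj ⟨y, hKs hy⟩ ⟨x, hKs hx⟩ from hK hy hx hyx).reachable

end InducedComponents

section InducedPsi

variable {V : Type*} [Finite V] {G : SimpleGraph V}

lemma gammaM_induce_eq_sum (m : ℕ) (s : Set V) [Fintype (G.induce s).ConnectedComponent] :
    gammaM m (G.induce s) = ∑ c : (G.induce s).ConnectedComponent,
      gammaTerm m (clqNum (G.induce (Subtype.val '' c.supp))) := by
  rw [gammaM_eq_sum]
  simp only [clqNum_induce_induce]

lemma psi_induce_eq_sum (m : ℕ) (s : Set V) [Fintype (G.induce s).ConnectedComponent] :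
    psi m (G.induce s) = ∑ c : (G.induce s).ConnectedComponent,
      componentWeight m G (Subtype.val '' c.supp) := by
  rw [psi_eq_finsum, finsum_eq_sum_of_fintype]
  refine Finset.sum_congr rfl fun c _ => ?_
  rw [componentWeight, componentWeight, clqNum_induce_induce,
    Set.ncard_image_of_injective _ Subtype.val_injective]

lemma psi_induce_support {m : ℕ} (hm : 2 ≤ m) (G : SimpleGraph V) :
    psi m (G.induce {u : V | ∃ w : V, G.Adj u w}) = psi m G := by
  classical
  have := Fintype.ofFinite G.ConnectedComponent
  have := Fintype.ofFinite (G.induce {u : V | ∃ w : V, G.Adj u w}).ConnectedComponent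
  rw [psi_induce_eq_sum, psi_eq_finsum, finsum_eq_sum_of_fintype,
    ← Finset.sum_fiberwise _ fun c => c.map (Embedding.induce _).toHom]
  refine Finset.sum_congr rfl fun d _ => ?_
  by_cases hd : d.supp ⊆ G.support
  · exact sum_map_induce_eq_of_supp_subset _ hd
  obtain ⟨x, hxd, hx⟩ := Set.not_subset.1 hd
  obtain rfl : G.connectedComponentMk x = d := hxd
  have hsupp := supp_connectedComponentMk_eq_singleton hx
  refine (sum_map_induce_eq_zero_of_disjoint _
    (hsupp ▸ Set.disjoint_singleton_left.2 hx)).trans ?_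
  rw [hsupp, componentWeight_singleton hm]

lemma psi_eq_of_forall_reachable_adj (m : ℕ)
    (h : ∀ u w : V, G.Reachable u w → u ≠ w → G.Adj u w) :
    psi m G = ∑ᶠ c : G.ConnectedComponent, min ((m : ℤ) - 1) ((c.supp.ncard : ℤ) - 1) := by
  rw [psi_eq_finsum]
  exact finsum_congr fun c => componentWeight_of_isClique m
    fun a ha b hb hab => h a b (c.reachable_of_mem_supp ha hb) hab

end InducedPsi

section Deletion

variable {V : Type*} [Finite V] {G : SimpleGraph V}

lemma natCard_setOf_ne_add_one (v : V) : Nat.card {u : V | u ≠ v} + 1 = Nat.card V := by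
  rw [Nat.card_coe_set_eq, ← Set.ncard_singleton v, add_comm]
  exact Set.ncard_add_ncard_compl {v}

lemma psi_induce_ne_add_le (m : ℕ) {v : V} {K : Set V} (hK : G.IsClique K) (hvK : v ∉ K)
    (hKv : K ⊆ (G.connectedComponentMk v).supp) {x : V} (hx : x ∈ K) :
    psi m (G.induce {u | u ≠ v}) + 1 +
        gammaTerm m (clqNum (G.induce (G.connectedComponentMk v).supp)) ≤
      psi m G + gammaTerm m K.ncard := by
  classical
  set s : Set V := {u | u ≠ v}
  set D := G.connectedComponentMk v
  have := Fintype.ofFinite G.ConnectedComponent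
  have := Fintype.ofFinite (G.induce s).ConnectedComponent
  have hKs : K ⊆ s := fun y hy hyv => hvK (hyv ▸ hy)
  set c₀ := (G.induce s).connectedComponentMk ⟨x, hKs hx⟩
  have hc₀ : c₀.map (Embedding.induce s).toHom = D := by
    rw [ConnectedComponent.map_mk]
    exact hKv hx
  have hpieces : ∑ c : (G.induce s).ConnectedComponent with c.map (Embedding.induce s).toHom = D,
      gammaTerm m (clqNum (G.induce (Subtype.val '' c.supp))) ≤ gammaTerm m K.ncard :=
    calc _ ≤ ∑ c ∈ {c₀}, gammaTerm m (clqNum (G.induce (Subtype.val '' c.supp))) :=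
          Finset.sum_le_sum_of_subset_of_nonpos' (by simpa using hc₀)
            fun c _ _ => (gammaTerm_le_neg_one _ _).trans (by norm_num)
      _ ≤ gammaTerm m K.ncard := by
          rw [Finset.sum_singleton]
          exact gammaTerm_antitone m
            (hK.ncard_le_clqNum_induce (hK.subset_image_supp_induce hKs hx))
  have hrest : ∀ d ∈ Finset.univ.erase D,
      ∑ c : (G.induce s).ConnectedComponent with c.map (Embedding.induce s).toHom = d,
        gammaTerm m (clqNum (G.induce (Subtype.val '' c.supp))) =
          gammaTerm m (clqNum (G.induce d.supp)) :=
    fun d hd => sum_map_induce_eq_of_supp_subset (fun S => gammaTerm m (clqNum (G.induce S)))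
      fun y hy hyv => Finset.ne_of_mem_erase hd (hyv ▸ hy).symm
  have hcard : (Nat.card s : ℤ) + 1 = Nat.card V := by
    exact_mod_cast natCard_setOf_ne_add_one v
  rw [psi, psi, gammaM_induce_eq_sum,
    ← Finset.sum_fiberwise _ fun c => c.map (Embedding.induce s).toHom, gammaM_eq_sum,
    ← Finset.add_sum_erase _ _ (Finset.mem_univ D),
    ← Finset.add_sum_erase _ _ (Finset.mem_univ D),
    Finset.sum_congr rfl hrest]
  linarith

lemma two_le_clqNum_induce_supp {v p : V} (hp : G.Adj v p) :
    2 ≤ clqNum (G.induce (G.connectedComponentMk v).supp) := by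
  have hsub : {v, p} ⊆ (G.connectedComponentMk v).supp :=
    Set.insert_subset rfl (Set.singleton_subset_iff.2 (ConnectedComponent.sound hp.symm.reachable))
  simpa [Set.ncard_pair hp.ne] using (isClique_pair.2 fun _ => hp).ncard_le_clqNum_induce hsub

lemma psi_induce_ne_le (m : ℕ) {v p : V} (hp : G.Adj v p) :
    psi m (G.induce {u | u ≠ v}) ≤ psi m G := by
  set D := G.connectedComponentMk v
  obtain ⟨K, hKD, hK, hKcard⟩ := exists_isClique_ncard_eq_clqNum_induce G D.supp
  have hω : 2 ≤ clqNum (G.induce D.supp) := two_le_clqNum_induce_supp hp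
  have hcard := Set.pred_ncard_le_ncard_sdiff_singleton K v
  obtain ⟨x, hx⟩ := Set.nonempty_of_ncard_ne_zero (s := K \ {v}) (by omega)
  have := psi_induce_ne_add_le m (hK.subset Set.sdiff_subset) (by simp)
    (Set.sdiff_subset.trans hKD) hx
  linarith [gammaTerm_le_add_one m (k := (K \ {v}).ncard) (l := clqNum (G.induce D.supp))
    (by omega)]

end Deletion

section AddNbrEdges

variable {V : Type*} {G : SimpleGraph V} {v : V}

lemma le_addNbrEdges (G : SimpleGraph V) (v : V) : G ≤ addNbrEdges G v := fun _ _ => Or.inl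

lemma reachable_addNbrEdges_iff {x y : V} :
    (addNbrEdges G v).Reachable x y ↔ G.Reachable x y := by
  refine ⟨?_, fun h => h.mono (le_addNbrEdges G v)⟩
  rintro ⟨w⟩
  induction w with
  | nil => rfl
  | cons h _ ih =>
    rcases h with h | ⟨-, ha, hb⟩
    · exact h.reachable.trans ih
    · exact (ha.symm.reachable.trans hb.reachable).trans ih

lemma supp_connectedComponentMk_addNbrEdges (x : V) :
    ((addNbrEdges G v).connectedComponentMk x).supp = (G.connectedComponentMk x).supp := by
  ext y
  simp only [ConnectedComponent.mem_supp_iff, ConnectedComponent.eq, reachable_addNbrEdges_iff]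

lemma supp_map_ofLE_addNbrEdges (c : G.ConnectedComponent) :
    (c.map (Hom.ofLE (le_addNbrEdges G v))).supp = c.supp := by
  induction c using ConnectedComponent.ind with | _ x =>
  rw [ConnectedComponent.map_mk]
  exact supp_connectedComponentMk_addNbrEdges x

lemma bijective_map_ofLE_addNbrEdges :
    Bijective (ConnectedComponent.map (Hom.ofLE (le_addNbrEdges G v))) :=
  ⟨fun c₁ c₂ h => ConnectedComponent.supp_injective <| by
      rw [← supp_map_ofLE_addNbrEdges c₁, h, supp_map_ofLE_addNbrEdges],
    ConnectedComponent.surjective_map_ofLE _⟩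

lemma induce_addNbrEdges_of_forall_not_adj {S : Set V} (hS : ∀ a ∈ S, ¬G.Adj v a) :
    (addNbrEdges G v).induce S = G.induce S := by
  ext a b
  exact ⟨fun h => h.resolve_right fun ⟨_, ha, _⟩ => hS a a.2 ha, Or.inl⟩

lemma isClique_addNbrEdges_neighborSet (G : SimpleGraph V) (v : V) :
    (addNbrEdges G v).IsClique (G.neighborSet v) :=
  fun _ ha _ hb hab => Or.inr ⟨hab, ha, hb⟩

lemma exists_isClique_addNbrEdges_ncard_eq {K : Set V} (hK : G.IsClique K) {p q : V}
    (hp : G.Adj v p) (hq : G.Adj v q) (hpq : p ≠ q) (hnpq : ¬G.Adj p q) :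
    ∃ K' ⊆ K ∪ G.neighborSet v,
      (addNbrEdges G v).IsClique K' ∧ v ∉ K' ∧ K'.ncard = K.ncard := by
  by_cases hvK : v ∈ K
  · obtain ⟨r, hr, hrK⟩ : ∃ r, G.Adj v r ∧ r ∉ K := by
      by_cases hpK : p ∈ K
      · exact ⟨q, hq, fun hqK => hnpq (hK hpK hqK hpq)⟩
      · exact ⟨p, hp, hpK⟩
    have hsub : insert r (K \ {v}) ⊆ G.neighborSet v := by
      rintro y (rfl | ⟨hyK, hyv⟩)
      · exact hr
      · exact hK hvK hyK (Ne.symm hyv)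
    exact ⟨_, hsub.trans Set.subset_union_right,
      (isClique_addNbrEdges_neighborSet G v).subset hsub,
      fun hv => G.irrefl (hsub hv), Set.ncard_exchange hrK hvK⟩
  · exact ⟨K, Set.subset_union_left, hK.mono (le_addNbrEdges G v), hvK, rfl⟩

variable [Finite V]

lemma psi_addNbrEdges_add (m : ℕ) (G : SimpleGraph V) (v : V) :
    psi m (addNbrEdges G v) + gammaTerm m (clqNum (G.induce (G.connectedComponentMk v).supp)) =
      psi m G +
        gammaTerm m (clqNum ((addNbrEdges G v).induce (G.connectedComponentMk v).supp)) := by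
  classical
  set D := G.connectedComponentMk v
  have := Fintype.ofFinite G.ConnectedComponent
  have := Fintype.ofFinite (addNbrEdges G v).ConnectedComponent
  have hrest : ∀ c ∈ Finset.univ.erase D,
      gammaTerm m (clqNum ((addNbrEdges G v).induce c.supp)) =
        gammaTerm m (clqNum (G.induce c.supp)) := by
    intro c hc
    rw [induce_addNbrEdges_of_forall_not_adj fun a ha hva =>
      Finset.ne_of_mem_erase hc (ha.symm.trans (ConnectedComponent.sound hva.reachable.symm))]
  rw [psi, psi, gammaM_eq_sum, gammaM_eq_sum, ← bijective_map_ofLE_addNbrEdges.sum_comp,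
    Finset.sum_congr rfl fun c _ => by rw [supp_map_ofLE_addNbrEdges c],
    ← Finset.add_sum_erase _ _ (Finset.mem_univ D),
    ← Finset.add_sum_erase _ _ (Finset.mem_univ D),
    Finset.sum_congr rfl hrest]
  ring

lemma psi_addNbrEdges_induce_ne_lt (m : ℕ) {p q : V} (hp : G.Adj v p) (hq : G.Adj v q)
    (hpq : p ≠ q) (hnpq : ¬G.Adj p q)
    (heq : gammaTerm m (clqNum ((addNbrEdges G v).induce (G.connectedComponentMk v).supp)) =
      gammaTerm m (clqNum (G.induce (G.connectedComponentMk v).supp))) :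
    psi m ((addNbrEdges G v).induce {u | u ≠ v}) < psi m (addNbrEdges G v) := by
  set D := G.connectedComponentMk v
  have hND : G.neighborSet v ⊆ D.supp := fun _ => D.mem_supp_of_adj_mem_supp rfl
  obtain ⟨K, hKD, hK, hKcard⟩ := exists_isClique_ncard_eq_clqNum_induce G D.supp
  obtain ⟨K', hK'sub, hK', hvK', hK'card⟩ :=
    exists_isClique_addNbrEdges_ncard_eq hK hp hq hpq hnpq
  have hω : 2 ≤ clqNum (G.induce D.supp) := two_le_clqNum_induce_supp hp
  obtain ⟨x, hx⟩ := Set.nonempty_of_ncard_ne_zero (s := K') (by omega)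
  have hsupp := supp_connectedComponentMk_addNbrEdges (G := G) (v := v) v
  have := psi_induce_ne_add_le m hK' hvK' (hsupp ▸ hK'sub.trans (Set.union_subset hKD hND)) hx
  rw [hsupp, hK'card, hKcard] at this
  linarith

end AddNbrEdges

section Internal

variable {V : Type*} {G : SimpleGraph V}

lemma SimpleGraph.Walk.exists_adj_adj_not_adj {u w : V} (p : G.Walk u w) (hne : u ≠ w)
    (hnadj : ¬G.Adj u w) : ∃ v a b : V, G.Adj v a ∧ G.Adj v b ∧ a ≠ b ∧ ¬G.Adj a b := by
  induction p with
  | nil => exact absurd rfl hne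
  | @cons u x w hux p ih =>
    by_cases hxw : x = w
    · exact absurd (hxw ▸ hux) hnadj
    by_cases hadj : G.Adj x w
    · exact ⟨x, u, w, hux.symm, hadj, hne, hnadj⟩
    · exact ih hxw hadj

variable [Finite V]

lemma exists_maxClq_superset {s : Set V} (hs : G.IsClique s) : ∃ t, MaxClq G t ∧ s ⊆ t := by
  obtain ⟨t, hst, ht⟩ := Finite.exists_le_maximal hs
  exact ⟨t, ⟨ht.1, fun t' ht' htt' => htt'.antisymm (ht.2 ht' htt')⟩, hst⟩

lemma internalVtx_of_adj_adj {v p q : V} (hp : G.Adj v p) (hq : G.Adj v q) (hpq : p ≠ q)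
    (hnpq : ¬G.Adj p q) : InternalVtx G v := by
  obtain ⟨s, hs, hps⟩ := exists_maxClq_superset (isClique_pair.2 fun _ => hp)
  obtain ⟨t, ht, hqt⟩ := exists_maxClq_superset (isClique_pair.2 fun _ => hq)
  refine ⟨s, t, hs, ht, fun hst => hnpq ?_, hps (by simp), hqt (by simp)⟩
  exact ht.1 (hst ▸ hps (by simp)) (hqt (by simp)) hpq

theorem exists_internalVtx_psi (m : ℕ) (G : SimpleGraph V)
    (h : ∃ u w : V, u ≠ w ∧ G.Reachable u w ∧ ¬G.Adj u w) :
    ∃ v : V, InternalVtx G v ∧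
      ((psi m (G.induce {u | u ≠ v}) ≤ psi m G ∧ psi m (addNbrEdges G v) < psi m G) ∨
        (psi m (G.induce {u | u ≠ v}) ≤ psi m G ∧ psi m (addNbrEdges G v) = psi m G ∧
          psi m ((addNbrEdges G v).induce {u | u ≠ v}) < psi m G)) := by
  obtain ⟨u, w, hne, ⟨walk⟩, hnadj⟩ := h
  obtain ⟨v, p, q, hp, hq, hpq, hnpq⟩ := walk.exists_adj_adj_not_adj hne hnadj
  refine ⟨v, internalVtx_of_adj_adj hp hq hpq hnpq, ?_⟩
  have hdel := psi_induce_ne_le m hp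
  have hadd := psi_addNbrEdges_add m G v
  have hmono : gammaTerm m (clqNum ((addNbrEdges G v).induce (G.connectedComponentMk v).supp)) ≤
      gammaTerm m (clqNum (G.induce (G.connectedComponentMk v).supp)) :=
    gammaTerm_antitone m (clqNum_mono fun _ _ h => Or.inl h)
  rcases hmono.lt_or_eq with hlt | heq
  · exact Or.inl ⟨hdel, by linarith⟩
  · have := psi_addNbrEdges_induce_ne_lt m hp hq hpq hnpq heq
    exact Or.inr ⟨hdel, by linarith, by linarith⟩

end Internal

/-- for every integer `m ≥ 2`, the (integer-valued) map
`G ↦ n(G) + γ_m(G)` is `(reg, m)`-compatible. -/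
theorem stmt9 (m : ℕ) (hm : 2 ≤ m) :
    RegCompatibleZ m (fun V _ G => (Nat.card V : ℤ) + gammaM m G) :=
  ⟨fun _ _ G => (psi_induce_support hm G).le,
    fun _ _ _ h _ => (psi_eq_of_forall_reachable_adj m h).ge,
    fun _ _ G h => exists_internalVtx_psi m G h⟩
end
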